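/- Let μ ∈ (0,1) and let (φ₀,φ₁,σ) be a subgame perfect equilibrium of the stage game Γ(μ). Then φ₀([max{2α⁻_μ−1,0}, 1]) = 1 and φ₁([max{1−2α⁺_μ,0}, 1]) = 1; that is, Firm 0 never prices below 2α⁻_μ−1 and Firm 1 never prices below 1−2α⁺_μ, where α⁻_μ = μα⁻/(μα⁻+(1−μ)(1−α⁻)) and α⁺_μ = μα⁺/(μα⁺+(1−μ)(1−α⁺)). -/

import Mathlib

open MeasureTheory Set Filter Topology
open scoped ENNReal NNReal

noncomputable section

/-- The consumer's possible actions: buy product 0, buy product 1, or exit. -/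
inductive CAction : Type
  | buy0 : CAction
  | buy1 : CAction
  | exit : CAction

instance : MeasurableSpace CAction := ⊤

/-- A signal structure `(F₀, F₁, S)`: two mutually absolutely continuous
probability measures on a measurable space `S`. -/
structure SignalStructure (S : Type) [MeasurableSpace S] : Type where
  F0 : Measure S
  F1 : Measure S
  prob0 : IsProbabilityMeasure F0
  prob1 : IsProbabilityMeasure F1
  ac01 : F0 ≪ F1
  ac10 : F1 ≪ F0

namespace SignalStructure

variable {S : Type} [MeasurableSpace S]

/-- The reference measure `(F₀ + F₁)/2`. -/
def ref (𝒮 : SignalStructure S) : Measure S := (2 : ℝ≥0∞)⁻¹ • (𝒮.F0 + 𝒮.F1)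

/-- Radon–Nikodym density of `F₀` with respect to `(F₀+F₁)/2`. -/
def f0 (𝒮 : SignalStructure S) : S → ℝ≥0∞ := 𝒮.F0.rnDeriv 𝒮.ref

/-- Radon–Nikodym density of `F₁` with respect to `(F₀+F₁)/2`. -/
def f1 (𝒮 : SignalStructure S) : S → ℝ≥0∞ := 𝒮.F1.rnDeriv 𝒮.ref

/-- The private belief `p(s) = f₀(s)/(f₀(s)+f₁(s))`. -/
def p (𝒮 : SignalStructure S) (s : S) : ℝ :=
  (𝒮.f0 s).toReal / ((𝒮.f0 s).toReal + (𝒮.f1 s).toReal)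

/-- `G₀(x) = F₀ {s | p(s) < x}`, the CDF of the private belief in state 0. -/
def G0 (𝒮 : SignalStructure S) (x : ℝ) : ℝ := (𝒮.F0 {s | 𝒮.p s < x}).toReal

/-- `G₁(x) = F₁ {s | p(s) < x}`, the CDF of the private belief in state 1. -/
def G1 (𝒮 : SignalStructure S) (x : ℝ) : ℝ := (𝒮.F1 {s | 𝒮.p s < x}).toReal

/-- `α⁻ = inf {x | G(x) > 0}`. -/
def alphaLo (𝒮 : SignalStructure S) : ℝ := sInf {x | 0 < 𝒮.G0 x}

/-- `α⁺ = sup {x | G(x) < 1}`. -/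
def alphaHi (𝒮 : SignalStructure S) : ℝ := sSup {x | 𝒮.G0 x < 1}

/-- Signals are bounded if `α⁻ > 0` and `α⁺ < 1`. -/
def Bounded (𝒮 : SignalStructure S) : Prop := 0 < 𝒮.alphaLo ∧ 𝒮.alphaHi < 1

/-- Signals are unbounded if `α⁻ = 0` and `α⁺ = 1`. -/
def Unbounded (𝒮 : SignalStructure S) : Prop := 𝒮.alphaLo = 0 ∧ 𝒮.alphaHi = 1

/-- Assumption 1: `G₀, G₁` are differentiable on `(α⁻, α⁺)` with continuous
nonnegative derivatives `g₀, g₁ : [α⁻, α⁺] → ℝ₊`. -/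
structure Assumption1 (𝒮 : SignalStructure S) (g0 g1 : ℝ → ℝ) : Prop where
  cont0 : ContinuousOn g0 (Icc 𝒮.alphaLo 𝒮.alphaHi)
  cont1 : ContinuousOn g1 (Icc 𝒮.alphaLo 𝒮.alphaHi)
  nonneg0 : ∀ x ∈ Icc 𝒮.alphaLo 𝒮.alphaHi, 0 ≤ g0 x
  nonneg1 : ∀ x ∈ Icc 𝒮.alphaLo 𝒮.alphaHi, 0 ≤ g1 x
  hasDeriv0 : ∀ x ∈ Ioo 𝒮.alphaLo 𝒮.alphaHi, HasDerivAt 𝒮.G0 (g0 x) x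
  hasDeriv1 : ∀ x ∈ Ioo 𝒮.alphaLo 𝒮.alphaHi, HasDerivAt 𝒮.G1 (g1 x) x

/-- The signal structure exhibits vanishing likelihood: `g₁(α⁻) = g₀(α⁺) = 0`. -/
def VanishingLikelihood (𝒮 : SignalStructure S) (g0 g1 : ℝ → ℝ) : Prop :=
  g1 𝒮.alphaLo = 0 ∧ g0 𝒮.alphaHi = 0

end SignalStructure

/-- Bayesian posterior on state 0 from a prior `μ` and a private belief `q`:
`p_μ = μ q / (μ q + (1-μ)(1-q))`. -/
def posterior (μ q : ℝ) : ℝ := μ * q / (μ * q + (1 - μ) * (1 - q))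

/-- The consumer's expected utility, given posterior `q` on state 0 and prices
`τ₀, τ₁`, from each action. -/
def cUtil (q τ0 τ1 : ℝ) : CAction → ℝ
  | CAction.buy0 => q - τ0
  | CAction.buy1 => (1 - q) - τ1
  | CAction.exit => 0

/-- A consumer pure strategy: maps the posted price pair and the signal to an action. -/
abbrev CStrategy (S : Type) : Type := ℝ → ℝ → S → CAction

/-- A mixed price strategy of a firm: a Borel probability measure on `[0,1]`. -/
def IsPriceStrategy (φ : Measure ℝ) : Prop :=
  IsProbabilityMeasure φ ∧ φ (Icc (0:ℝ) 1) = 1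

namespace SignalStructure

variable {S : Type} [MeasurableSpace S]

/-- The signal distribution under prior `μ`: the mixture `μ F₀ + (1-μ) F₁`. -/
def Fmix (𝒮 : SignalStructure S) (μ : ℝ) : Measure S :=
  ENNReal.ofReal μ • 𝒮.F0 + ENNReal.ofReal (1 - μ) • 𝒮.F1

/-- The probability (under prior `μ`) that the consumer takes action `a` when the
pure prices `τ₀, τ₁` are posted. -/
def actProb (𝒮 : SignalStructure S) (μ : ℝ) (σ : CStrategy S) (τ0 τ1 : ℝ) (a : CAction) : ℝ :=
  (𝒮.Fmix μ {s | σ τ0 τ1 s = a}).toReal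

/-- Firm 0's expected payoff in `Γ(μ)` under mixed strategies `φ₀, φ₁` and consumer
strategy `σ`. -/
def Pi0 (𝒮 : SignalStructure S) (μ : ℝ) (φ0 φ1 : Measure ℝ) (σ : CStrategy S) : ℝ :=
  ∫ τ, 𝒮.actProb μ σ τ.1 τ.2 CAction.buy0 * τ.1 ∂(φ0.prod φ1)

/-- Firm 1's expected payoff in `Γ(μ)`. -/
def Pi1 (𝒮 : SignalStructure S) (μ : ℝ) (φ0 φ1 : Measure ℝ) (σ : CStrategy S) : ℝ :=
  ∫ τ, 𝒮.actProb μ σ τ.1 τ.2 CAction.buy1 * τ.2 ∂(φ0.prod φ1)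

/-- The probability that the consumer takes action `a` under mixed price strategies. -/
def actProbMix (𝒮 : SignalStructure S) (μ : ℝ) (φ0 φ1 : Measure ℝ) (σ : CStrategy S)
    (a : CAction) : ℝ :=
  ∫ τ, 𝒮.actProb μ σ τ.1 τ.2 a ∂(φ0.prod φ1)

/-- A subgame perfect equilibrium of the stage game `Γ(μ)`: the consumer strategy is a
best reply to every price pair, and each firm's mixed price strategy maximizes its
expected payoff given the opponent's strategy and the consumer's strategy. -/
structure IsSPE (𝒮 : SignalStructure S) (μ : ℝ) (φ0 φ1 : Measure ℝ) (σ : CStrategy S) :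
    Prop where
  strat0 : IsPriceStrategy φ0
  strat1 : IsPriceStrategy φ1
  meas : ∀ τ0 τ1, Measurable (σ τ0 τ1)
  consumerBR : ∀ τ0 ∈ Icc (0:ℝ) 1, ∀ τ1 ∈ Icc (0:ℝ) 1,
    ∀ᵐ s ∂(𝒮.Fmix μ), ∀ a : CAction,
      cUtil (posterior μ (𝒮.p s)) τ0 τ1 a ≤ cUtil (posterior μ (𝒮.p s)) τ0 τ1 (σ τ0 τ1 s)
  firm0opt : ∀ ψ : Measure ℝ, IsPriceStrategy ψ → 𝒮.Pi0 μ ψ φ1 σ ≤ 𝒮.Pi0 μ φ0 φ1 σ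
  firm1opt : ∀ ψ : Measure ℝ, IsPriceStrategy ψ → 𝒮.Pi1 μ φ0 ψ σ ≤ 𝒮.Pi1 μ φ0 φ1 σ

/-- A deterrence equilibrium: an SPE in which some firm sells with probability zero. -/
def IsDeterrence (𝒮 : SignalStructure S) (μ : ℝ) (φ0 φ1 : Measure ℝ) (σ : CStrategy S) :
    Prop :=
  𝒮.IsSPE μ φ0 φ1 σ ∧
    (𝒮.actProbMix μ φ0 φ1 σ CAction.buy0 = 0 ∨ 𝒮.actProbMix μ φ0 φ1 σ CAction.buy1 = 0)

/-- The market is full at `(μ, σ, τ₀, τ₁)` if the consumer exits with probability zero. -/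
def MarketFull (𝒮 : SignalStructure S) (μ : ℝ) (σ : CStrategy S) (τ0 τ1 : ℝ) : Prop :=
  𝒮.Fmix μ {s | σ τ0 τ1 s = CAction.exit} = 0

open scoped Classical in
/-- The consumer's best-reply threshold `v_μ(τ₀,τ₁)` on the private belief. -/
def v (𝒮 : SignalStructure S) (μ : ℝ) (σ : CStrategy S) (τ0 τ1 : ℝ) : ℝ :=
  if 𝒮.MarketFull μ σ τ0 τ1 then
    (1 - μ) * (1 + τ0 - τ1) / (2 * μ - (2 * μ - 1) * (1 + τ0 - τ1))
  else (1 - μ) * τ0 / (μ - (2 * μ - 1) * τ0)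

end SignalStructure

/-! At a price `τ₀ < 2α⁻_μ − 1` firm 0 sells with probability one whatever firm 1 charges:
every posterior is at least `α⁻_μ`, so product 0 beats both product 1 at a nonnegative price
and exiting. On `[0, c)`, `c = 2α⁻_μ − 1`, firm 0's profit is therefore its price, and if its
equilibrium strategy charged `[0, c)` with positive probability, moving that mass to a single
price of `[0, c)` above its conditional mean would strictly raise profit. Firm 1 is symmetric,
with `α⁺_μ`. -/

section PriceDeviation

variable {f : ℝ × ℝ → ℝ} {α ρ η : Measure ℝ} {D : Set ℝ} {c : ℝ}

lemma IsPriceStrategy.ae_mem_Icc (hη : IsPriceStrategy η) : ∀ᵐ y ∂η, y ∈ Icc (0:ℝ) 1 :=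
  have := hη.1
  (prob_compl_eq_zero_iff measurableSet_Icc).2 hη.2

lemma isPriceStrategy_of_ae_mem_Icc [IsProbabilityMeasure ρ] (h : ∀ᵐ x ∂ρ, x ∈ Icc (0:ℝ) 1) :
    IsPriceStrategy ρ :=
  ⟨inferInstance, (prob_compl_eq_zero_iff measurableSet_Icc).1 h⟩

lemma isPriceStrategy_dirac {t : ℝ} (ht : t ∈ Icc (0:ℝ) 1) : IsPriceStrategy (Measure.dirac t) :=
  isPriceStrategy_of_ae_mem_Icc (ae_dirac_iff measurableSet_Icc |>.2 ht)

lemma IsPriceStrategy.measure_Icc_max_eq_one (hρ : IsPriceStrategy ρ) (hc : ρ (Ico 0 c) = 0) :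
    ρ (Icc (max c 0) 1) = 1 := by
  have := hρ.1
  refine le_antisymm prob_le_one ?_
  calc (1 : ℝ≥0∞) = ρ (Icc 0 1) := hρ.2.symm
    _ ≤ ρ (Ico 0 c ∪ Icc (max c 0) 1) := measure_mono fun x hx ↦ by
        rcases lt_or_ge x c with h | h
        · exact Or.inl ⟨hx.1, h⟩
        · exact Or.inr ⟨max_le h hx.1, hx.2⟩
    _ ≤ ρ (Ico 0 c) + ρ (Icc (max c 0) 1) := measure_union_le _ _
    _ = ρ (Icc (max c 0) 1) := by rw [hc, zero_add]

lemma ae_eq_fst_of_eqOn_prod [SFinite α] (hη : IsPriceStrategy η) (hα : ∀ᵐ x ∂α, x ∈ D)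
    (hf : ∀ x ∈ D, ∀ y ∈ Icc (0:ℝ) 1, f (x, y) = x) : f =ᵐ[α.prod η] Prod.fst := by
  filter_upwards [Measure.quasiMeasurePreserving_fst.ae hα,
    Measure.quasiMeasurePreserving_snd.ae hη.ae_mem_Icc] with τ hx hy
  exact hf τ.1 hx τ.2 hy

lemma integral_prod_eq_integral_of_eqOn [SFinite α] (hη : IsPriceStrategy η)
    (hα : ∀ᵐ x ∂α, x ∈ D) (hf : ∀ x ∈ D, ∀ y ∈ Icc (0:ℝ) 1, f (x, y) = x) :
    ∫ τ, f τ ∂(α.prod η) = ∫ x, x ∂α := by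
  have := hη.1
  rw [integral_congr_ae (ae_eq_fst_of_eqOn_prod hη hα hf), integral_fun_fst (fun x ↦ x),
    probReal_univ, one_smul]

lemma integrable_prod_of_eqOn [IsFiniteMeasure α] (hη : IsPriceStrategy η) (hD : D ⊆ Icc 0 1)
    (hα : ∀ᵐ x ∂α, x ∈ D) (hf : ∀ x ∈ D, ∀ y ∈ Icc (0:ℝ) 1, f (x, y) = x) :
    Integrable f (α.prod η) := by
  have := hη.1
  have hid : Integrable (fun x : ℝ ↦ x) α :=
    .of_mem_Icc 0 1 aemeasurable_id (hα.mono fun _ hx ↦ hD hx)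
  exact (hid.comp_fst η).congr (ae_eq_fst_of_eqOn_prod hη hα hf).symm

end PriceDeviation

section Optimality

variable {f : ℝ × ℝ → ℝ} {ρ η : Measure ℝ} {c : ℝ}

lemma setIntegral_Ico_lt_mul [IsFiniteMeasure ρ] (hρ : ρ (Ico 0 c) ≠ 0) :
    ∫ x in Ico 0 c, x ∂ρ < c * ρ.real (Ico 0 c) := by
  have hint : IntegrableOn (fun x : ℝ ↦ x) (Ico 0 c) ρ :=
    .of_mem_Icc 0 c aemeasurable_id ((ae_restrict_mem measurableSet_Ico).mono fun _ hx ↦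
      Ico_subset_Icc_self hx)
  have hpos : 0 < ∫ x in Ico 0 c, (c - x) ∂ρ := by
    rw [setIntegral_pos_iff_support_of_nonneg_ae
      ((ae_restrict_mem measurableSet_Ico).mono fun x hx ↦ sub_nonneg.2 hx.2.le)
      ((integrable_const c).sub hint)]
    refine lt_of_lt_of_le (pos_iff_ne_zero.2 hρ) (measure_mono fun x hx ↦ ⟨?_, hx⟩)
    exact sub_ne_zero.2 hx.2.ne'
  rw [integral_sub (integrable_const c) hint, setIntegral_const, smul_eq_mul] at hpos
  linarith

lemma exists_lt_mean_lt [IsFiniteMeasure ρ] (hρ : ρ (Ico 0 c) ≠ 0) :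
    ∃ t, 0 < t ∧ t < c ∧ ∫ x in Ico 0 c, x ∂ρ < ρ.real (Ico 0 c) * t := by
  have hr : 0 < ρ.real (Ico 0 c) := ENNReal.toReal_pos hρ (measure_ne_top _ _)
  obtain ⟨x, hx0, hxc⟩ := nonempty_of_measure_ne_zero hρ
  have hm : (∫ x in Ico 0 c, x ∂ρ) / ρ.real (Ico 0 c) < c :=
    (div_lt_iff₀ hr).2 (setIntegral_Ico_lt_mul hρ)
  obtain ⟨t, ht, htc⟩ := exists_between (max_lt hm (hx0.trans_lt hxc))
  exact ⟨t, (le_max_right _ _).trans_lt ht, htc,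
    (div_lt_iff₀' hr).1 ((le_max_left _ _).trans_lt ht)⟩

lemma IsPriceStrategy.restrict_compl_add_dirac (hρ : IsPriceStrategy ρ) {D : Set ℝ}
    (hD : MeasurableSet D) {t : ℝ} (ht : t ∈ Icc (0:ℝ) 1) :
    IsPriceStrategy (ρ.restrict Dᶜ + ρ D • Measure.dirac t) := by
  have := hρ.1
  have : IsProbabilityMeasure (ρ.restrict Dᶜ + ρ D • Measure.dirac t) :=
    ⟨by simpa [add_comm] using measure_add_measure_compl (μ := ρ) hD⟩
  refine isPriceStrategy_of_ae_mem_Icc (ae_add_measure_iff.2 ⟨?_, ?_⟩)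
  · exact ae_restrict_of_ae hρ.ae_mem_Icc
  · exact Measure.ae_smul_measure (ae_dirac_iff measurableSet_Icc |>.2 ht) _

theorem IsPriceStrategy.measure_Ico_eq_zero_of_optimal (hρ : IsPriceStrategy ρ)
    (hη : IsPriceStrategy η) (hc : c ≤ 1)
    (hf : ∀ x ∈ Ico 0 c, ∀ y ∈ Icc (0:ℝ) 1, f (x, y) = x)
    (hopt : ∀ ψ, IsPriceStrategy ψ → ∫ τ, f τ ∂(ψ.prod η) ≤ ∫ τ, f τ ∂(ρ.prod η)) :
    ρ (Ico 0 c) = 0 := by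
  have := hρ.1
  have := hη.1
  set D := Ico (0:ℝ) c
  have hD : D ⊆ Icc 0 1 := fun x hx ↦ ⟨hx.1, hx.2.le.trans hc⟩
  have hdirac : ∀ t ∈ D, ∫ τ, f τ ∂((Measure.dirac t).prod η) = t := fun t ht ↦ by
    rw [integral_prod_eq_integral_of_eqOn hη (ae_dirac_iff measurableSet_Ico |>.2 ht) hf,
      integral_dirac]
  by_contra hρD
  obtain ⟨t, ht0, htc, hmean⟩ := exists_lt_mean_lt hρD
  have htD : t ∈ D := ⟨ht0.le, htc⟩
  have hsplit : ρ.prod η = (ρ.restrict D).prod η + (ρ.restrict Dᶜ).prod η := by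
    rw [← Measure.add_prod, Measure.restrict_add_restrict_compl measurableSet_Ico]
  -- `f` need not even be measurable (the consumer's reply is arbitrary in the prices), so
  -- integrability is derived from optimality: otherwise the payoff is the junk value `0`.
  have hint : Integrable f (ρ.prod η) := by
    by_contra h
    have := hopt _ (isPriceStrategy_dirac (hD htD))
    rw [hdirac t htD, integral_undef h] at this
    linarith
  have hintD : Integrable f ((ρ.restrict D).prod η) :=
    integrable_prod_of_eqOn hη hD (ae_restrict_mem measurableSet_Ico) hf
  have hintDc : Integrable f ((ρ.restrict Dᶜ).prod η) :=
    hint.mono_measure (hsplit ▸ Measure.le_add_left le_rfl)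
  have hpayoff : ∫ τ, f τ ∂(ρ.prod η) =
      ∫ x in D, x ∂ρ + ∫ τ, f τ ∂((ρ.restrict Dᶜ).prod η) := by
    rw [hsplit, integral_add_measure hintD hintDc,
      integral_prod_eq_integral_of_eqOn hη (ae_restrict_mem measurableSet_Ico) hf]
  set ψ := ρ.restrict Dᶜ + ρ D • Measure.dirac t
  have hψ : IsPriceStrategy ψ := hρ.restrict_compl_add_dirac measurableSet_Ico (hD htD)
  have hdeviation : ∫ τ, f τ ∂(ψ.prod η) =
      ∫ τ, f τ ∂((ρ.restrict Dᶜ).prod η) + ρ.real D * t := by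
    rw [Measure.add_prod, Measure.prod_smul_left, integral_add_measure hintDc
      ((integrable_prod_of_eqOn hη hD (ae_dirac_iff measurableSet_Ico |>.2 htD) hf).smul_measure
        (measure_ne_top _ _)), integral_smul_measure, hdirac t htD, measureReal_def, smul_eq_mul]
  linarith [hopt ψ hψ]

theorem IsPriceStrategy.measure_Ico_eq_zero_of_optimal_snd (hρ : IsPriceStrategy ρ)
    (hη : IsPriceStrategy η) (hc : c ≤ 1)
    (hf : ∀ x ∈ Icc (0:ℝ) 1, ∀ y ∈ Ico 0 c, f (x, y) = y)
    (hopt : ∀ ψ, IsPriceStrategy ψ → ∫ τ, f τ ∂(η.prod ψ) ≤ ∫ τ, f τ ∂(η.prod ρ)) :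
    ρ (Ico 0 c) = 0 := by
  have := hρ.1
  have := hη.1
  refine hρ.measure_Ico_eq_zero_of_optimal hη hc (f := f ∘ Prod.swap)
    (fun x hx y hy ↦ hf y hy x hx) fun ψ hψ ↦ ?_
  have := hψ.1
  simpa only [Function.comp_apply, integral_prod_swap] using hopt ψ hψ

end Optimality

section Consumer

variable {μ q τ0 τ1 : ℝ}

lemma posterior_denom_pos (hμ : μ ∈ Ioo (0:ℝ) 1) (hq : q ∈ Icc (0:ℝ) 1) :
    0 < μ * q + (1 - μ) * (1 - q) := by
  obtain ⟨hμ0, hμ1⟩ := hμ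
  obtain ⟨hq0, hq1⟩ := hq
  nlinarith [mul_nonneg hμ0.le hq0, mul_nonneg (sub_nonneg.2 hμ1.le) (sub_nonneg.2 hq1)]

lemma posterior_mem_Icc (hμ : μ ∈ Ioo (0:ℝ) 1) (hq : q ∈ Icc (0:ℝ) 1) :
    posterior μ q ∈ Icc (0:ℝ) 1 := by
  have hd := posterior_denom_pos hμ hq
  refine ⟨div_nonneg (mul_nonneg hμ.1.le hq.1) hd.le, (div_le_one hd).2 ?_⟩
  nlinarith [mul_nonneg (sub_nonneg.2 hμ.2.le) (sub_nonneg.2 hq.2)]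

lemma posterior_monotoneOn (hμ : μ ∈ Ioo (0:ℝ) 1) : MonotoneOn (posterior μ) (Icc 0 1) := by
  intro a ha b hb hab
  rw [posterior, posterior, div_le_div_iff₀ (posterior_denom_pos hμ ha) (posterior_denom_pos hμ hb)]
  nlinarith [mul_nonneg (mul_nonneg hμ.1.le (sub_nonneg.2 hμ.2.le)) (sub_nonneg.2 hab)]

lemma eq_buy0_of_forall_cUtil_le {b : CAction} (hb : ∀ a, cUtil q τ0 τ1 a ≤ cUtil q τ0 τ1 b)
    (hq : q ≤ 1) (hτ1 : 0 ≤ τ1) (hτ0 : τ0 < 2 * q - 1) : b = .buy0 := by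
  have h := hb .buy0
  cases b <;> simp only [cUtil] at h <;> first | rfl | linarith

lemma eq_buy1_of_forall_cUtil_le {b : CAction} (hb : ∀ a, cUtil q τ0 τ1 a ≤ cUtil q τ0 τ1 b)
    (hq : 0 ≤ q) (hτ0 : 0 ≤ τ0) (hτ1 : τ1 < 1 - 2 * q) : b = .buy1 := by
  have h := hb .buy1
  cases b <;> simp only [cUtil] at h <;> first | rfl | linarith

end Consumer

lemma ae_le_of_forall_lt_ae_le {Ω : Type*} [MeasurableSpace Ω] {ν : Measure Ω} {g : Ω → ℝ}
    {a : ℝ} (h : ∀ y, a < y → ∀ᵐ s ∂ν, g s ≤ y) : ∀ᵐ s ∂ν, g s ≤ a := by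
  have : ∀ᵐ s ∂ν, ∀ n : ℕ, g s ≤ a + 1 / (n + 1) :=
    ae_all_iff.2 fun n ↦ h _ (lt_add_of_pos_right a Nat.one_div_pos_of_nat)
  filter_upwards [this] with s hs
  refine le_of_forall_pos_lt_add fun ε hε ↦ ?_
  obtain ⟨n, hn⟩ := exists_nat_one_div_lt hε
  linarith [hs n]

namespace SignalStructure

variable {S : Type} [MeasurableSpace S] (𝒮 : SignalStructure S)

lemma p_nonneg (s : S) : 0 ≤ 𝒮.p s := by
  unfold p
  positivity

lemma p_le_one (s : S) : 𝒮.p s ≤ 1 :=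
  div_le_one_of_le₀ (le_add_of_nonneg_right ENNReal.toReal_nonneg) (by positivity)

lemma p_mem_Icc (s : S) : 𝒮.p s ∈ Icc (0:ℝ) 1 := ⟨𝒮.p_nonneg s, 𝒮.p_le_one s⟩

lemma measurable_p : Measurable 𝒮.p :=
  (Measure.measurable_rnDeriv _ _).ennreal_toReal.div
    ((Measure.measurable_rnDeriv _ _).ennreal_toReal.add
      (Measure.measurable_rnDeriv _ _).ennreal_toReal)

lemma nonneg_of_G0_pos {x : ℝ} (hx : 0 < 𝒮.G0 x) : 0 ≤ x := by
  by_contra! h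
  have : {s | 𝒮.p s < x} = ∅ :=
    eq_empty_of_forall_notMem fun s hs ↦ (h.trans_le (𝒮.p_nonneg s)).not_gt hs
  simp [G0, this] at hx

lemma le_one_of_G0_lt_one {x : ℝ} (hx : 𝒮.G0 x < 1) : x ≤ 1 := by
  have := 𝒮.prob0
  by_contra! h
  have : {s | 𝒮.p s < x} = univ := eq_univ_of_forall fun s ↦ (𝒮.p_le_one s).trans_lt h
  simp [G0, this] at hx

lemma alphaLo_nonneg : 0 ≤ 𝒮.alphaLo := by
  have h2 : 0 < 𝒮.G0 2 :=
    lt_of_not_ge fun h ↦ by linarith [𝒮.le_one_of_G0_lt_one (x := 2) (by linarith)]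
  exact le_csInf ⟨2, h2⟩ fun _ ↦ 𝒮.nonneg_of_G0_pos

lemma alphaHi_le_one : 𝒮.alphaHi ≤ 1 := by
  have h0 : 𝒮.G0 (-1) < 1 :=
    lt_of_not_ge fun h ↦ by linarith [𝒮.nonneg_of_G0_pos (x := -1) (by linarith)]
  exact csSup_le ⟨-1, h0⟩ fun _ ↦ 𝒮.le_one_of_G0_lt_one

lemma ae_alphaLo_le_p : ∀ᵐ s ∂𝒮.F0, 𝒮.alphaLo ≤ 𝒮.p s := by
  have hlow : ∀ y < 𝒮.alphaLo, ∀ᵐ s ∂𝒮.F0, y ≤ 𝒮.p s := fun y hy ↦ by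
    have hG : ¬ 0 < 𝒮.G0 y := fun h ↦ hy.not_ge (csInf_le ⟨0, fun _ ↦ 𝒮.nonneg_of_G0_pos⟩ h)
    have := 𝒮.prob0
    have hnull : 𝒮.F0 {s | 𝒮.p s < y} = 0 :=
      (measureReal_eq_zero_iff).1 (le_antisymm (not_lt.1 hG) ENNReal.toReal_nonneg)
    simpa using measure_eq_zero_iff_ae_notMem.1 hnull
  have := ae_le_of_forall_lt_ae_le (g := fun s ↦ -𝒮.p s) (a := -𝒮.alphaLo) fun y hy ↦
    (hlow (-y) (by linarith)).mono fun s hs ↦ by linarith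
  exact this.mono fun s hs ↦ by linarith

lemma ae_p_le_alphaHi : ∀ᵐ s ∂𝒮.F0, 𝒮.p s ≤ 𝒮.alphaHi := by
  have := 𝒮.prob0
  refine ae_le_of_forall_lt_ae_le fun y hy ↦ ?_
  have hG : ¬ 𝒮.G0 y < 1 := fun h ↦ hy.not_ge (le_csSup ⟨1, fun _ ↦ 𝒮.le_one_of_G0_lt_one⟩ h)
  have hfull : 𝒮.F0 {s | 𝒮.p s < y} = 1 :=
    le_antisymm prob_le_one (by simpa using ENNReal.ofReal_le_of_le_toReal (not_lt.1 hG))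
  have : ∀ᵐ s ∂𝒮.F0, 𝒮.p s < y :=
    (prob_compl_eq_zero_iff (measurableSet_lt 𝒮.measurable_p measurable_const)).2 hfull
  exact this.mono fun s hs ↦ hs.le

lemma alphaLo_mem_Icc : 𝒮.alphaLo ∈ Icc (0:ℝ) 1 := by
  have := 𝒮.prob0
  obtain ⟨s, hs⟩ := 𝒮.ae_alphaLo_le_p.exists
  exact ⟨𝒮.alphaLo_nonneg, hs.trans (𝒮.p_le_one s)⟩

lemma alphaHi_mem_Icc : 𝒮.alphaHi ∈ Icc (0:ℝ) 1 := by
  have := 𝒮.prob0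
  obtain ⟨s, hs⟩ := 𝒮.ae_p_le_alphaHi.exists
  exact ⟨(𝒮.p_nonneg s).trans hs, 𝒮.alphaHi_le_one⟩

lemma Fmix_absolutelyContinuous (μ : ℝ) : 𝒮.Fmix μ ≪ 𝒮.F0 :=
  (Measure.AbsolutelyContinuous.rfl.smul_left _).add_left (𝒮.ac10.smul_left _)

lemma isProbabilityMeasure_Fmix {μ : ℝ} (hμ : μ ∈ Icc (0:ℝ) 1) :
    IsProbabilityMeasure (𝒮.Fmix μ) := by
  have := 𝒮.prob0
  have := 𝒮.prob1
  constructor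
  simp [Fmix, ← ENNReal.ofReal_add hμ.1 (sub_nonneg.2 hμ.2)]

variable {𝒮} {μ : ℝ} {φ0 φ1 : Measure ℝ} {σ : CStrategy S}

lemma actProb_eq_one_of_ae (hμ : μ ∈ Icc (0:ℝ) 1) {τ0 τ1 : ℝ} {a : CAction}
    (h : ∀ᵐ s ∂𝒮.Fmix μ, σ τ0 τ1 s = a) : 𝒮.actProb μ σ τ0 τ1 a = 1 := by
  have := 𝒮.isProbabilityMeasure_Fmix hμ
  rw [actProb, measure_congr (ae_eq_univ.2 h), measure_univ, ENNReal.toReal_one]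

lemma IsSPE.actProb_buy0_eq_one (h : 𝒮.IsSPE μ φ0 φ1 σ) (hμ : μ ∈ Ioo (0:ℝ) 1) {τ0 τ1 : ℝ}
    (hτ0 : τ0 ∈ Icc (0:ℝ) 1) (hτ1 : τ1 ∈ Icc (0:ℝ) 1)
    (hlow : τ0 < 2 * posterior μ 𝒮.alphaLo - 1) : 𝒮.actProb μ σ τ0 τ1 .buy0 = 1 := by
  refine actProb_eq_one_of_ae (Ioo_subset_Icc_self hμ) ?_
  filter_upwards [h.consumerBR τ0 hτ0 τ1 hτ1,
    (𝒮.Fmix_absolutelyContinuous μ).ae_le 𝒮.ae_alphaLo_le_p] with s hbr hs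
  have hpost : posterior μ 𝒮.alphaLo ≤ posterior μ (𝒮.p s) :=
    posterior_monotoneOn hμ 𝒮.alphaLo_mem_Icc (𝒮.p_mem_Icc s) hs
  exact eq_buy0_of_forall_cUtil_le hbr (posterior_mem_Icc hμ (𝒮.p_mem_Icc s)).2 hτ1.1
    (by linarith)

lemma IsSPE.actProb_buy1_eq_one (h : 𝒮.IsSPE μ φ0 φ1 σ) (hμ : μ ∈ Ioo (0:ℝ) 1) {τ0 τ1 : ℝ}
    (hτ0 : τ0 ∈ Icc (0:ℝ) 1) (hτ1 : τ1 ∈ Icc (0:ℝ) 1)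
    (hlow : τ1 < 1 - 2 * posterior μ 𝒮.alphaHi) : 𝒮.actProb μ σ τ0 τ1 .buy1 = 1 := by
  refine actProb_eq_one_of_ae (Ioo_subset_Icc_self hμ) ?_
  filter_upwards [h.consumerBR τ0 hτ0 τ1 hτ1,
    (𝒮.Fmix_absolutelyContinuous μ).ae_le 𝒮.ae_p_le_alphaHi] with s hbr hs
  have hpost : posterior μ (𝒮.p s) ≤ posterior μ 𝒮.alphaHi :=
    posterior_monotoneOn hμ (𝒮.p_mem_Icc s) 𝒮.alphaHi_mem_Icc hs
  exact eq_buy1_of_forall_cUtil_le hbr (posterior_mem_Icc hμ (𝒮.p_mem_Icc s)).1 hτ0.1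
    (by linarith)

lemma IsSPE.firm0_measure_Ico_eq_zero (h : 𝒮.IsSPE μ φ0 φ1 σ) (hμ : μ ∈ Ioo (0:ℝ) 1) :
    φ0 (Ico 0 (2 * posterior μ 𝒮.alphaLo - 1)) = 0 := by
  have hc : 2 * posterior μ 𝒮.alphaLo - 1 ≤ 1 := by
    linarith [(posterior_mem_Icc hμ 𝒮.alphaLo_mem_Icc).2]
  refine h.strat0.measure_Ico_eq_zero_of_optimal h.strat1 hc (fun x hx y hy ↦ ?_)
    h.firm0opt
  rw [h.actProb_buy0_eq_one hμ ⟨hx.1, hx.2.le.trans hc⟩ hy hx.2, one_mul]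

lemma IsSPE.firm1_measure_Ico_eq_zero (h : 𝒮.IsSPE μ φ0 φ1 σ) (hμ : μ ∈ Ioo (0:ℝ) 1) :
    φ1 (Ico 0 (1 - 2 * posterior μ 𝒮.alphaHi)) = 0 := by
  have hc : 1 - 2 * posterior μ 𝒮.alphaHi ≤ 1 := by
    linarith [(posterior_mem_Icc hμ 𝒮.alphaHi_mem_Icc).1]
  refine h.strat1.measure_Ico_eq_zero_of_optimal_snd h.strat0 hc (fun x hx y hy ↦ ?_)
    h.firm1opt
  rw [h.actProb_buy1_eq_one hμ hx ⟨hy.1, hy.2.le.trans hc⟩ hy.2, one_mul]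

end SignalStructure

theorem stmt5_general {S : Type} [MeasurableSpace S] (𝒮 : SignalStructure S)
    (μ : ℝ) (hμ : μ ∈ Ioo (0:ℝ) 1)
    (φ0 φ1 : Measure ℝ) (σ : CStrategy S)
    (hSPE : 𝒮.IsSPE μ φ0 φ1 σ) :
    φ0 (Icc (max (2 * posterior μ 𝒮.alphaLo - 1) 0) 1) = 1 ∧
      φ1 (Icc (max (1 - 2 * posterior μ 𝒮.alphaHi) 0) 1) = 1 :=
  ⟨hSPE.strat0.measure_Icc_max_eq_one (hSPE.firm0_measure_Ico_eq_zero hμ),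
    hSPE.strat1.measure_Icc_max_eq_one (hSPE.firm1_measure_Ico_eq_zero hμ)⟩

/-- In every SPE of Γ(μ), Firm 0 never prices below 2α⁻_μ − 1 and
Firm 1 never prices below 1 − 2α⁺_μ:
φ₀([max{2α⁻_μ−1,0},1]) = 1 and φ₁([max{1−2α⁺_μ,0},1]) = 1. -/
theorem stmt5 {S : Type} [MeasurableSpace S] (𝒮 : SignalStructure S)
    (g0 g1 : ℝ → ℝ) (hA : 𝒮.Assumption1 g0 g1)
    (μ : ℝ) (hμ : μ ∈ Ioo (0:ℝ) 1)
    (φ0 φ1 : Measure ℝ) (σ : CStrategy S)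
    (hSPE : 𝒮.IsSPE μ φ0 φ1 σ) :
    φ0 (Icc (max (2 * posterior μ 𝒮.alphaLo - 1) 0) 1) = 1 ∧
      φ1 (Icc (max (1 - 2 * posterior μ 𝒮.alphaHi) 0) 1) = 1 :=
  stmt5_general 𝒮 μ hμ φ0 φ1 σ hSPE
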